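/- For all real numbers a, b (not both zero) and every real p with 1 < p < 2, one has (|a|^{p-2}a - |b|^{p-2}b)(a - b) ≥ (p-1) |a - b|^2 (|a|^2 + |b|^2)^{(p-2)/2}. -/
import Mathlib

lemma aux_rpow (c : ℝ) (hc : 0 < c) (p : ℝ) : c ^ (p - 2) * c = c ^ (p - 1) := by
  rw [← Real.rpow_add_one hc.ne']
  congr 1; ring

lemma key1 (p : ℝ) (hp1 : 1 < p) (hp2 : p < 2) (x : ℝ) (hx : |x| ≤ 1) :
    |x| ^ (p - 2) * x ≤ (p - 1) * x + (2 - p) := by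
  rcases lt_trichotomy x 0 with h | h | h
  · set t := |x| with ht
    have htpos : 0 < t := abs_pos.mpr h.ne
    have hxt : x = -t := by rw [ht, abs_of_neg h]; ring
    have h1 : t ^ (1:ℝ) ≤ t ^ (p - 1) :=
      Real.rpow_le_rpow_of_exponent_ge htpos hx (by linarith)
    rw [Real.rpow_one] at h1
    have h3 : (p - 1) * t ≤ t := by nlinarith
    calc t ^ (p - 2) * x = -(t ^ (p - 2) * t) := by rw [hxt]; ring
      _ = -(t ^ (p - 1)) := by rw [aux_rpow t htpos p]
      _ ≤ -t := by linarith
      _ ≤ -((p - 1) * t) := by linarith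
      _ ≤ (p - 1) * x + (2 - p) := by rw [hxt]; nlinarith
  · simp only [h, abs_zero, mul_zero]
    linarith
  · have hax : |x| = x := abs_of_pos h
    rw [hax, aux_rpow x h p]
    have h2 := Real.geom_mean_le_arith_mean2_weighted (by linarith : (0:ℝ) ≤ p - 1)
      (by linarith : (0:ℝ) ≤ 2 - p) h.le zero_le_one (by ring)
    simpa using h2

lemma key2 (p : ℝ) (hp1 : 1 < p) (hp2 : p < 2) (c x : ℝ) (hc : 0 < c) (hx : |x| ≤ c) :
    |x| ^ (p - 2) * x ≤ (p - 1) * x * c ^ (p - 2) + (2 - p) * c ^ (p - 1) := by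
  have h1 : |x / c| ≤ 1 := by
    rw [abs_div, abs_of_pos hc, div_le_one hc]; exact hx
  have h2 := key1 p hp1 hp2 (x / c) h1
  have hcp1 : (0:ℝ) < c ^ (p - 1) := Real.rpow_pos_of_pos hc _
  have hcp2 : (0:ℝ) < c ^ (p - 2) := Real.rpow_pos_of_pos hc _
  have key : |x / c| ^ (p - 2) * (x / c) * c ^ (p - 1) = |x| ^ (p - 2) * x := by
    rw [abs_div, abs_of_pos hc, Real.div_rpow (abs_nonneg x) hc.le, ← aux_rpow c hc p]
    field_simp
  have h4 : |x / c| ^ (p - 2) * (x / c) * c ^ (p - 1) ≤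
      ((p - 1) * (x / c) + (2 - p)) * c ^ (p - 1) :=
    mul_le_mul_of_nonneg_right h2 hcp1.le
  rw [key] at h4
  refine h4.trans_eq ?_
  rw [← aux_rpow c hc p]
  field_simp

lemma main_pos (p : ℝ) (hp1 : 1 < p) (hp2 : p < 2) (a b : ℝ) (hb : 0 < b) (hab : |a| ≤ b) :
    (|a| ^ (p - 2) * a - |b| ^ (p - 2) * b) * (a - b) ≥
      (p - 1) * (a - b) ^ 2 * |b| ^ (p - 2) := by
  have hbb : |b| = b := abs_of_pos hb
  rw [hbb]
  have ha : a ≤ b := (le_abs_self a).trans hab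
  have hk := key2 p hp1 hp2 b a hb hab
  have e2 : b ^ (p - 2) * b = b ^ (p - 1) := aux_rpow b hb p
  have h5 : |a| ^ (p - 2) * a - b ^ (p - 2) * b - (p - 1) * (a - b) * b ^ (p - 2) ≤ 0 := by
    nlinarith [hk, e2]
  nlinarith [mul_nonneg (neg_nonneg.mpr h5) (sub_nonneg.mpr ha)]

lemma main_max (p : ℝ) (hp1 : 1 < p) (hp2 : p < 2) (a b : ℝ) (hb : b ≠ 0) (hab : |a| ≤ |b|) :
    (|a| ^ (p - 2) * a - |b| ^ (p - 2) * b) * (a - b) ≥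
      (p - 1) * (a - b) ^ 2 * |b| ^ (p - 2) := by
  rcases lt_or_gt_of_ne hb with h | h
  · have hba : |a| ≤ -b := by rwa [← abs_of_neg h]
    have this1 := main_pos p hp1 hp2 (-a) (-b) (by linarith) (by rwa [abs_neg])
    rw [abs_neg, abs_neg] at this1
    have hb2 : |b| = -b := abs_of_neg h
    rw [hb2] at this1 ⊢
    nlinarith [this1]
  · have hab' : |a| ≤ b := by rwa [abs_of_pos h] at hab
    rw [abs_of_pos h]
    have := main_pos p hp1 hp2 a b h hab'
    rwa [abs_of_pos h] at this

theorem scalar_monotonicity_p_lt_two (p : ℝ) (hp1 : 1 < p) (hp2 : p < 2) (a b : ℝ)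
    (hab : ¬(a = 0 ∧ b = 0)) :
    (|a| ^ (p - 2) * a - |b| ^ (p - 2) * b) * (a - b) ≥
      (p - 1) * |a - b| ^ (2 : ℕ) * (|a| ^ (2 : ℕ) + |b| ^ (2 : ℕ)) ^ ((p - 2) / 2) := by
  set M : ℝ := max |a| |b| with hM
  have hM0 : 0 < M := by
    rcases not_and_or.mp hab with h | h
    · exact lt_max_of_lt_left (abs_pos.mpr h)
    · exact lt_max_of_lt_right (abs_pos.mpr h)
  have hstep1 : (|a| ^ (p - 2) * a - |b| ^ (p - 2) * b) * (a - b) ≥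
      (p - 1) * (a - b) ^ 2 * M ^ (p - 2) := by
    rcases le_total |a| |b| with h | h
    · have hb : b ≠ 0 := by
        intro hb0; rw [hb0, abs_zero] at h
        simp [hM, hb0, abs_nonpos_iff.mp h] at hM0
      have := main_max p hp1 hp2 a b hb h
      rwa [hM, max_eq_right h]
    · have ha : a ≠ 0 := by
        intro ha0; rw [ha0, abs_zero] at h
        simp [hM, ha0, abs_nonpos_iff.mp h] at hM0
      have := main_max p hp1 hp2 b a ha h
      rw [hM, max_eq_left h]
      nlinarith [this]
  have hstep2 : (|a| ^ (2:ℕ) + |b| ^ (2:ℕ) : ℝ) ^ ((p - 2) / 2) ≤ M ^ (p - 2) := by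
    have hM2 : M ^ (2:ℕ) ≤ |a| ^ (2:ℕ) + |b| ^ (2:ℕ) := by
      rcases max_cases |a| |b| with ⟨he, _⟩ | ⟨he, _⟩ <;> rw [hM, he] <;>
        nlinarith [sq_nonneg a, sq_nonneg b, abs_nonneg a, abs_nonneg b]
    have hMM : (0:ℝ) < M ^ (2:ℕ) := by positivity
    have h1 : (|a| ^ (2:ℕ) + |b| ^ (2:ℕ) : ℝ) ^ ((p - 2) / 2) ≤ (M ^ (2:ℕ)) ^ ((p - 2) / 2) :=
      Real.rpow_le_rpow_of_nonpos hMM hM2 (by linarith)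
    refine h1.trans_eq ?_
    rw [← Real.rpow_natCast M 2, ← Real.rpow_mul hM0.le]
    congr 1; push_cast; ring
  have hsq : |a - b| ^ (2:ℕ) = (a - b) ^ 2 := sq_abs _
  rw [hsq]
  have hnn : (0:ℝ) ≤ (p - 1) * (a - b) ^ 2 := mul_nonneg (by linarith) (sq_nonneg _)
  calc (p - 1) * (a - b) ^ 2 * (|a| ^ (2:ℕ) + |b| ^ (2:ℕ)) ^ ((p - 2) / 2)
      ≤ (p - 1) * (a - b) ^ 2 * M ^ (p - 2) := mul_le_mul_of_nonneg_left hstep2 hnn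
    _ ≤ (|a| ^ (p - 2) * a - |b| ^ (p - 2) * b) * (a - b) := hstep1
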